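/- (Uniformity) In the canonical model, if K_x φ ∈ w for a world w and a variable x with canonical value [x], then for every variable y with [y] = [x] we have K_y φ ∈ w. -/
import Mathlib


/-- The two sorts: agents and objects. -/
inductive Srt : Type | agt | obj
deriving DecidableEq

/-- Variables, tagged with a sort. -/
abbrev Var : Type := Srt × ℕ

/-- Terms: variables and constants, each tagged with a sort. -/
inductive Tm : Type
  | var : Var → Tm
  | con : Var → Tm
deriving DecidableEq

/-- The sort of a term. -/
def Tm.srt : Tm → Srt
  | .var x => x.1
  | .con c => c.1

/-- Formulas of the two-sorted term-modal language. -/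
inductive Fml : Type
  | rel : ℕ → List Tm → Fml
  | eq : Tm → Tm → Fml
  | neg : Fml → Fml
  | imp : Fml → Fml → Fml
  | all : Var → Fml → Fml
  | K : Tm → Fml → Fml
deriving DecidableEq

/-- Conjunction, defined from negation and implication. -/
def Fml.and (φ ψ : Fml) : Fml := Fml.neg (φ.imp ψ.neg)

/-- An assignment of truth values to formulas that is boolean-homomorphic on
negation and implication. -/
def BoolHom (b : Fml → Bool) : Prop :=
  (∀ φ, b (Fml.neg φ) = !b φ) ∧ (∀ φ ψ, b (Fml.imp φ ψ) = (!b φ || b ψ))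

/-- Substitution instances of propositional tautologies: formulas true under
every assignment that is boolean-homomorphic on ¬ and →. -/
def Taut (φ : Fml) : Prop := ∀ b : Fml → Bool, BoolHom b → b φ = true

/-- Conjunction of a finite list of formulas (empty list gives a tautology). -/
def conjF : List Fml → Fml
  | [] => Fml.imp (Fml.rel 0 []) (Fml.rel 0 [])
  | φ :: l => φ.and (conjF l)

/-- Γ ⊢_Λ φ : some finite conjunction of members of Γ provably implies φ in Λ. -/
def Deduces (Λ Γ : Set Fml) (φ : Fml) : Prop :=
  ∃ l : List Fml, (∀ ψ ∈ l, ψ ∈ Γ) ∧ Fml.imp (conjF l) φ ∈ Λ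

/-- Γ is Λ-consistent: no contradiction φ ∧ ¬φ is deducible from Γ. -/
def Consistent (Λ Γ : Set Fml) : Prop := ¬ ∃ φ : Fml, Deduces Λ Γ (φ.and φ.neg)

/-- Maximally Λ-consistent set. -/
def MaxConsistent (Λ Γ : Set Fml) : Prop :=
  Consistent Λ Γ ∧ ∀ Δ : Set Fml, Γ ⊂ Δ → ¬ Consistent Λ Δ

lemma conj_all (b : Fml → Bool) (hb : BoolHom b) :
    ∀ l : List Fml, b (conjF l) = l.all b := by
  intro l
  induction l with
  | nil => simp [conjF, hb.2]
  | cons φ l ih =>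
    simp [conjF, Fml.and, hb.1, hb.2, ih]

/-- Uniformity: in the canonical model — whose worlds are
maximally Λ-consistent sets for a normal logic Λ containing substitutivity of
identicals for modal operators, and whose canonical valuation identifies
variables x, y exactly when (x = y) ∈ w — if K_x φ ∈ w and y has the same
canonical value as x (i.e. (x = y) ∈ w), then K_y φ ∈ w. -/
theorem canonical_uniformity (Λ : Set Fml)
    (taut : ∀ φ, Taut φ → φ ∈ Λ)
    (mp : ∀ φ ψ : Fml, Fml.imp φ ψ ∈ Λ → φ ∈ Λ → ψ ∈ Λ)
    (psK : ∀ (x y : Var) (φ : Fml),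
      Fml.imp (Fml.eq (Tm.var x) (Tm.var y))
        (Fml.imp (Fml.K (Tm.var x) φ) (Fml.K (Tm.var y) φ)) ∈ Λ)
    (w : Set Fml) (hw : MaxConsistent Λ w)
    (x y : Var) (hxy : Fml.eq (Tm.var x) (Tm.var y) ∈ w)
    (φ : Fml) (hK : Fml.K (Tm.var x) φ ∈ w) :
    Fml.K (Tm.var y) φ ∈ w := by
  set ψ := Fml.K (Tm.var y) φ with hψ
  have hded : Deduces Λ w ψ := by
    refine ⟨[Fml.eq (Tm.var x) (Tm.var y), Fml.K (Tm.var x) φ], ?_, ?_⟩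
    · intro ζ hζ
      simp only [List.mem_cons, List.mem_singleton, List.not_mem_nil, or_false] at hζ
      rcases hζ with h | h <;> subst h <;> assumption
    · refine mp _ _ (taut _ ?_) (psK x y φ)
      intro b hb
      simp only [hb.2, conj_all b hb, List.all_cons, List.all_nil, Bool.and_true]
      cases b (Fml.eq (Tm.var x) (Tm.var y)) <;>
        cases b (Fml.K (Tm.var x) φ) <;> cases b (Fml.K (Tm.var y) φ) <;> simp_all
  by_contra hn
  have hsub : w ⊂ insert ψ w :=
    ⟨Set.subset_insert _ _, fun h => hn (h (Set.mem_insert _ _))⟩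
  obtain ⟨χ, l, hl, hlΛ⟩ := not_not.mp (hw.2 _ hsub)
  obtain ⟨m, hm, hmΛ⟩ := hded
  refine hw.1 ⟨χ, m ++ l.filter (· ≠ ψ), ?_, ?_⟩
  · intro ζ hζ
    rcases List.mem_append.mp hζ with h | h
    · exact hm ζ h
    · have h2 := List.of_mem_filter h
      have h1 := List.mem_of_mem_filter h
      rcases hl ζ h1 with h | h
      · exact absurd h (by simpa using h2)
      · exact h
  · refine mp _ _ (mp _ _ (taut _ ?_) hmΛ) hlΛ
    intro b hb
    simp only [hb.1, hb.2, conj_all b hb, List.all_append, Bool.or_eq_true,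
      Bool.not_eq_true', Bool.and_eq_true, List.all_eq_true]
    have key : b ψ = true →
        (List.filter (fun x => decide (x ≠ ψ)) l).all b = true → l.all b = true := by
      intro hψ1 hf
      rw [List.all_eq_true] at hf ⊢
      intro ζ hζ
      by_cases hz : ζ = ψ
      · rw [hz]; exact hψ1
      · exact hf ζ (List.mem_filter.mpr ⟨hζ, by simpa using hz⟩)
    cases hm1 : m.all b <;> cases hψ1 : b ψ <;>
      cases hf : (List.filter (fun x => decide (x ≠ ψ)) l).all b <;>
      cases hc : b (χ.and χ.neg) <;> simp_all
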